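/- For the sequence Γ^m_{22} of rational functions in u^2, u^3, ..., defined by Γ^2_{22} = −ε/u^2 and Γ^{m+1}_{22} = −(1/u^2) Σ_{s=1}^{m-1} u^{2+s} Γ^{m+1-s}_{22}, the shift-derivative identity ∂Γ^h_{22}/∂u^l = ∂Γ^{h-1}_{22}/∂u^{l-1} holds for all h ≥ 3 and l ≥ 3. -/

import Mathlib

/-!
With `U(z) = ∑_{j ≥ 2} u^j z^{j-2}` and `Γ(z) = ∑_{m ≥ 2} Γ^m_{22} z^{m-2}`, the recursion says
`U Γ = -ε`. Differentiating in `u^l` gives `U ∂_l Γ = -z^{l-2} Γ`, i.e. coefficientwise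
`∑_j u^j ∂_l Γ^{h+2-j} = -Γ^{h+2-l}`. Subtracting this identity for `(h - 1, l - 1)` from the one
for `(h, l)` and using the shift identity for smaller `h` leaves
`u^2 (∂_l Γ^h - ∂_{l-1} Γ^{h-1}) = 0`.
-/

/-- Partial derivative of `f` with respect to the variable `u^l` at the point `x`. -/
noncomputable def pd (l : ℕ) (f : (ℕ → ℝ) → ℝ) (x : ℕ → ℝ) : ℝ :=
  deriv (fun t => f (Function.update x l t)) (x l)

open Finset Function Filter Topology

def PartialDifferentiableAt (l : ℕ) (f : (ℕ → ℝ) → ℝ) (x : ℕ → ℝ) : Prop :=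
  DifferentiableAt ℝ (fun t => f (update x l t)) (x l)

namespace PartialDifferentiableAt

variable {l : ℕ} {f g : (ℕ → ℝ) → ℝ} {x : ℕ → ℝ}

lemma const (c : ℝ) : PartialDifferentiableAt l (fun _ => c) x :=
  differentiableAt_const c

lemma apply (j : ℕ) : PartialDifferentiableAt l (fun y => y j) x := by
  unfold PartialDifferentiableAt
  by_cases hj : j = l
  · subst hj
    simpa only [update_self] using differentiableAt_fun_id
  · simpa only [update_of_ne hj] using differentiableAt_const (x j)

lemma neg (hf : PartialDifferentiableAt l f x) : PartialDifferentiableAt l (fun y => -f y) x :=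
  DifferentiableAt.neg hf

lemma mul (hf : PartialDifferentiableAt l f x) (hg : PartialDifferentiableAt l g x) :
    PartialDifferentiableAt l (fun y => f y * g y) x :=
  DifferentiableAt.mul hf hg

lemma div (hf : PartialDifferentiableAt l f x) (hg : PartialDifferentiableAt l g x) (hx : g x ≠ 0) :
    PartialDifferentiableAt l (fun y => f y / g y) x :=
  DifferentiableAt.div hf hg (by rwa [update_eq_self])

lemma sum {ι : Type*} {s : Finset ι} {F : ι → (ℕ → ℝ) → ℝ}
    (hF : ∀ i ∈ s, PartialDifferentiableAt l (F i) x) :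
    PartialDifferentiableAt l (fun y => ∑ i ∈ s, F i y) x :=
  DifferentiableAt.fun_sum hF

end PartialDifferentiableAt

section PartialDerivative

variable {l : ℕ} {f g : (ℕ → ℝ) → ℝ} {x : ℕ → ℝ}

lemma pd_const (c : ℝ) : pd l (fun _ => c) x = 0 :=
  deriv_const _ c

lemma pd_apply (j : ℕ) : pd l (fun y => y j) x = if j = l then 1 else 0 := by
  unfold pd
  split_ifs with hj
  · subst hj
    simpa only [update_self] using congrFun deriv_id'' _
  · simpa only [update_of_ne hj] using deriv_const _ (x j)

lemma pd_mul (hf : PartialDifferentiableAt l f x) (hg : PartialDifferentiableAt l g x) :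
    pd l (fun y => f y * g y) x = pd l f x * g x + f x * pd l g x := by
  unfold pd
  rw [deriv_fun_mul hf hg, update_eq_self]

lemma pd_sum {ι : Type*} {s : Finset ι} {F : ι → (ℕ → ℝ) → ℝ}
    (hF : ∀ i ∈ s, PartialDifferentiableAt l (F i) x) :
    pd l (fun y => ∑ i ∈ s, F i y) x = ∑ i ∈ s, pd l (F i) x :=
  deriv_fun_sum hF

lemma pd_congr_of_eventuallyEq (hfg : f =ᶠ[𝓝 x] g) : pd l f x = pd l g x := by
  have hline : Tendsto (fun t => update x l t) (𝓝 (x l)) (𝓝 x) := by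
    simpa only [update_eq_self] using
      (continuous_const.update l continuous_id : Continuous fun t : ℝ => update x l t).tendsto (x l)
  exact EventuallyEq.deriv_eq (hline.eventually hfg)

end PartialDerivative

/-- The coefficient of `z^{h-2}` in `U(z) Γ(z)`, where `G m` plays the role of `Γ^m_{22}`. -/
def seriesProdCoeff (G : ℕ → (ℕ → ℝ) → ℝ) (h : ℕ) (x : ℕ → ℝ) : ℝ :=
  ∑ s ∈ Icc 0 (h - 2), x (2 + s) * G (h - s) x

lemma seriesProdCoeff_eq_add (G : ℕ → (ℕ → ℝ) → ℝ) (h : ℕ) (x : ℕ → ℝ) :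
    seriesProdCoeff G h x = x 2 * G h x + ∑ s ∈ Icc 1 (h - 2), x (2 + s) * G (h - s) x := by
  rw [seriesProdCoeff, ← add_sum_Ioc_eq_sum_Icc (Nat.zero_le _), ← Icc_add_one_left_eq_Ioc]
  rfl

section ChristoffelRecursion

variable {ε : ℝ} {G : ℕ → (ℕ → ℝ) → ℝ} (h2 : ∀ x, G 2 x = -ε / x 2)
include h2

lemma pd_two_of_recursion {l : ℕ} (hl : l ≠ 2) (x : ℕ → ℝ) : pd l (G 2) x = 0 := by
  simp only [pd, h2, update_of_ne (Ne.symm hl), deriv_const]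

variable (hrec : ∀ m : ℕ, 2 ≤ m → ∀ x,
    G (m + 1) x = -(1 / x 2) * ∑ s ∈ Icc 1 (m - 1), x (2 + s) * G (m + 1 - s) x)
include hrec

lemma partialDifferentiableAt_of_recursion {m : ℕ} (hm : 2 ≤ m) (l : ℕ) {x : ℕ → ℝ}
    (hx : x 2 ≠ 0) : PartialDifferentiableAt l (G m) x := by
  induction m using Nat.strong_induction_on with
  | _ m ih =>
    obtain rfl | hm := hm.eq_or_lt
    · simpa only [← funext h2] using
        (PartialDifferentiableAt.const (-ε)).div (.apply 2) hx
    obtain ⟨m, rfl⟩ : ∃ k, m = k + 1 := ⟨m - 1, by omega⟩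
    rw [funext (hrec m (by omega))]
    exact .mul (.neg (.div (.const 1) (.apply 2) hx))
      (.sum fun s hs => .mul (.apply _) (ih _ (by grind) (by grind)))

lemma seriesProdCoeff_of_recursion {h : ℕ} (hh : 2 ≤ h) {x : ℕ → ℝ} (hx : x 2 ≠ 0) :
    seriesProdCoeff G h x = if h = 2 then -ε else 0 := by
  rw [seriesProdCoeff_eq_add]
  obtain rfl | hh := hh.eq_or_lt
  · simp [h2, mul_div_cancel₀ _ hx]
  obtain ⟨m, rfl⟩ : ∃ m, h = m + 1 := ⟨h - 1, by omega⟩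
  rw [hrec m (by omega), if_neg (by omega), Nat.add_sub_add_right m 1 1]
  field_simp
  ring

lemma sum_mul_pd_of_recursion {h : ℕ} (hh : 2 ≤ h) {l : ℕ} (hl : 2 ≤ l) {x : ℕ → ℝ}
    (hx : x 2 ≠ 0) :
    ∑ s ∈ Icc 0 (h - 2), x (2 + s) * pd l (G (h - s)) x =
      -(if l ≤ h then G (h + 2 - l) x else 0) := by
  have hconst : pd l (seriesProdCoeff G h) x = 0 := by
    rw [pd_congr_of_eventuallyEq (g := fun _ => if h = 2 then -ε else 0), pd_const]
    filter_upwards [(isOpen_ne_fun (continuous_apply 2) continuous_const).mem_nhds hx] with y hy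
    exact seriesProdCoeff_of_recursion h2 hrec hh hy
  have hdiff : ∀ s ∈ Icc 0 (h - 2), PartialDifferentiableAt l (G (h - s)) x := fun s hs =>
    partialDifferentiableAt_of_recursion h2 hrec (by grind) l hx
  unfold seriesProdCoeff at hconst
  rw [pd_sum fun s hs => (PartialDifferentiableAt.apply _).mul (hdiff s hs),
    sum_congr rfl fun s hs => pd_mul (.apply _) (hdiff s hs)] at hconst
  simp only [pd_apply, sum_add_distrib] at hconst
  have hkron : ∑ s ∈ Icc 0 (h - 2), (if 2 + s = l then 1 else 0) * G (h - s) x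
      = if l ≤ h then G (h + 2 - l) x else 0 := by
    split_ifs with hlh
    · rw [sum_eq_single_of_mem (l - 2) (by simp; omega)
        fun s _ hs => by rw [if_neg (by omega), zero_mul]]
      rw [if_pos (by omega), one_mul, show h - (l - 2) = h + 2 - l by omega]
    · exact sum_eq_zero fun s hs => by rw [if_neg (by simp at hs; omega), zero_mul]
  linarith

lemma pd_sub_pd_shift_of_recursion {h : ℕ} (hh : 3 ≤ h) {l : ℕ} (hl : 3 ≤ l) {x : ℕ → ℝ}
    (hx : x 2 ≠ 0) :
    x 2 * (pd l (G h) x - pd (l - 1) (G (h - 1)) x) +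
      ∑ s ∈ Icc 1 (h - 3), x (2 + s) * (pd l (G (h - s)) x - pd (l - 1) (G (h - 1 - s)) x) = 0 := by
  have hA := sum_mul_pd_of_recursion h2 hrec (h := h) (by omega) (l := l) (by omega) hx
  have hB := sum_mul_pd_of_recursion h2 hrec (h := h - 1) (by omega) (l := l - 1) (by omega) hx
  rw [show h - 2 = h - 3 + 1 by omega, sum_Icc_succ_top (by omega),
    show h - (h - 3 + 1) = 2 by omega, pd_two_of_recursion h2 (by omega), mul_zero, add_zero] at hA
  rw [show h - 1 - 2 = h - 3 by omega, show h - 1 + 2 - (l - 1) = h + 2 - l by omega] at hB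
  rw [← add_sum_Ioc_eq_sum_Icc (Nat.zero_le _), ← Icc_add_one_left_eq_Ioc] at hA hB
  simp only [show l - 1 ≤ h - 1 ↔ l ≤ h by omega, add_zero, Nat.sub_zero, zero_add] at hA hB
  simp only [mul_sub, sum_sub_distrib]
  linarith

end ChristoffelRecursion

theorem statement8_general (ε : ℝ) (G : ℕ → (ℕ → ℝ) → ℝ)
    (h2 : ∀ x, G 2 x = -ε / x 2)
    (hrec : ∀ m : ℕ, 2 ≤ m → ∀ x,
      G (m + 1) x = -(1 / x 2) * ∑ s ∈ Finset.Icc 1 (m - 1), x (2 + s) * G (m + 1 - s) x) :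
    ∀ h l : ℕ, 3 ≤ h → 3 ≤ l → ∀ x : ℕ → ℝ, x 2 ≠ 0 →
      pd l (G h) x = pd (l - 1) (G (h - 1)) x := by
  intro h
  induction h using Nat.strong_induction_on with
  | _ h ih =>
    intro l hh hl x hx
    have hshift := pd_sub_pd_shift_of_recursion h2 hrec hh hl hx
    rw [sum_eq_zero fun s hs => by
      rw [ih (h - s) (by grind) l (by grind) hl x hx, Nat.sub_right_comm, sub_self, mul_zero],
      add_zero, mul_eq_zero, sub_eq_zero] at hshift
    exact hshift.resolve_left hx

/-- **Lemma 7.1, single Jordan block.** For the recursively defined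
rational functions `Γ^m_{22}` (here `G m`), the shift-derivative identity
`∂Γ^h_{22}/∂u^l = ∂Γ^{h-1}_{22}/∂u^{l-1}` holds for all `h ≥ 3`, `l ≥ 3`. -/
theorem statement8 (ε : ℝ) (G : ℕ → (ℕ → ℝ) → ℝ)
    (h1 : ∀ x, G 1 x = 0)
    (h2 : ∀ x, G 2 x = -ε / x 2)
    (hrec : ∀ m : ℕ, 2 ≤ m → ∀ x,
      G (m + 1) x = -(1 / x 2) * ∑ s ∈ Finset.Icc 1 (m - 1), x (2 + s) * G (m + 1 - s) x) :
    ∀ h l : ℕ, 3 ≤ h → 3 ≤ l → ∀ x : ℕ → ℝ, x 2 ≠ 0 →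
      pd l (G h) x = pd (l - 1) (G (h - 1)) x :=
  statement8_general ε G h2 hrec
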